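/- arXiv:2405.18353 — 2 statements merged into one kernel-verified Lean document; each statement's English description precedes it below -/
import Mathlib

section
/- Let d be a positive integer, let μ be a probability measure on EuclideanSpace ℝ (Fin d) (the law of X_{t_{n−1}}), and let k : EuclideanSpace ℝ (Fin d) → EuclideanSpace ℝ (Fin d) → ℝ be such that: for every x₀, the function k(x₀, ·) is differentiable and strictly positive; for every x, the function x₀ ↦ k(x₀, x) is integrable with respect to μ; the marginal m(x) := ∫ k(x₀, x) dμ(x₀) is strictly positive and differentiable; and differentiation under the integral sign holds, i.e., for every x, x₀ ↦ ∇_x k(x₀, x) is integrable with respect to μ and ∇m(x) = ∫ ∇_x k(x₀, x) dμ(x₀). Let G : EuclideanSpace ℝ (Fin d) → EuclideanSpace ℝ (Fin d) be measurable, and assume the function (x₀, x) ↦ k(x₀, x) · ⟪∇_x (log k(x₀, ·))(x), G(x)⟫ is integrable with respect to μ ⊗ Lebesgue and the function x ↦ m(x) · ⟪∇(log ∘ m)(x), G(x)⟫ is integrable with respect to Lebesgue measure. Then ∫ m(x) · ⟪∇(log ∘ m)(x), G(x)⟫ dx = ∫∫ k(x₀, x) · ⟪∇_x (log k(x₀,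 ·))(x), G(x)⟫ dμ(x₀) dx. (This is the cross-term identity C₃ in the proof of Theorem 3 of the paper.) -/
open MeasureTheory

/-! The identity already holds pointwise in `x`, before integrating over `x`. Where `m` and
`k(x₀, ·)` are positive, `m ∇(log m) = ∇m` and `k ∇ₓ(log k) = ∇ₓk`, so both integrands reduce
to `⟪∇m(x), G(x)⟫ = ∫ ⟪∇ₓk(x₀, x), G(x)⟫ dμ(x₀)`, which is differentiation under the integral
sign paired with the fixed vector `G(x)`. -/

section Gradient

variable {F : Type*} [NormedAddCommGroup F] [InnerProductSpace ℝ F] [CompleteSpace F]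
  {f : F → ℝ} {x : F}

theorem gradient_log_comp (hf : DifferentiableAt ℝ f x) (hx : f x ≠ 0) :
    gradient (fun y => Real.log (f y)) x = (f x)⁻¹ • gradient f x := by
  unfold gradient
  rw [fderiv.log hf hx, map_smul]

theorem mul_inner_gradient_log_comp (hf : DifferentiableAt ℝ f x) (hx : f x ≠ 0) (v : F) :
    f x * inner ℝ (gradient (fun y => Real.log (f y)) x) v = inner ℝ (gradient f x) v := by
  rw [gradient_log_comp hf hx, real_inner_smul_left, ← mul_assoc, mul_inv_cancel₀ hx, one_mul]

end Gradient

theorem integral_inner_const_right {α E : Type*} [MeasurableSpace α] {μ : Measure α}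
    [NormedAddCommGroup E] [InnerProductSpace ℝ E] [CompleteSpace E] {f : α → E}
    (hf : Integrable f μ) (c : E) :
    ∫ a, inner ℝ (f a) c ∂μ = inner ℝ (∫ a, f a ∂μ) c := by
  simpa only [real_inner_comm c] using integral_inner hf c

theorem cross_term_identity_general
    (d : ℕ)
    (μ : Measure (EuclideanSpace ℝ (Fin d)))
    (k : EuclideanSpace ℝ (Fin d) → EuclideanSpace ℝ (Fin d) → ℝ)
    (m : EuclideanSpace ℝ (Fin d) → ℝ)
    (hk_diff : ∀ x₀, Differentiable ℝ (k x₀))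
    (hk_pos : ∀ x₀ x, 0 < k x₀ x)
    (hm_pos : ∀ x, 0 < m x)
    (hm_diff : Differentiable ℝ m)
    (hgrad_int : ∀ x, Integrable (fun x₀ => gradient (k x₀) x) μ)
    (hswap : ∀ x, gradient m x = ∫ x₀, gradient (k x₀) x ∂μ)
    (G : EuclideanSpace ℝ (Fin d) → EuclideanSpace ℝ (Fin d)) :
    ∫ x, m x * (inner ℝ (gradient (Real.log ∘ m) x) (G x) : ℝ)
      = ∫ x, ∫ x₀,
          k x₀ x * (inner ℝ (gradient (fun y => Real.log (k x₀ y)) x) (G x) : ℝ) ∂μ := by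
  congr 1
  funext x
  calc m x * inner ℝ (gradient (Real.log ∘ m) x) (G x)
      = inner ℝ (gradient m x) (G x) :=
        mul_inner_gradient_log_comp (hm_diff x) (hm_pos x).ne' (G x)
    _ = ∫ x₀, inner ℝ (gradient (k x₀) x) (G x) ∂μ := by
        rw [hswap x, integral_inner_const_right (hgrad_int x)]
    _ = ∫ x₀, k x₀ x * inner ℝ (gradient (fun y => Real.log (k x₀ y)) x) (G x) ∂μ := by
        congr 1
        funext x₀
        exact (mul_inner_gradient_log_comp (hk_diff x₀ x) (hk_pos x₀ x).ne' (G x)).symm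

/-- Cross-term identity `C₃`: under differentiation under the integral sign for the
mixture `m x = ∫ k x₀ x dμ(x₀)`, the marginal-score cross term equals the
conditional-score cross term:
`∫ m(x) ⟪∇(log ∘ m)(x), G(x)⟫ dx = ∫∫ k(x₀,x) ⟪∇ₓ(log k(x₀,·))(x), G(x)⟫ dμ(x₀) dx`. -/
theorem cross_term_identity
    (d : ℕ) (hd : 0 < d)
    (μ : Measure (EuclideanSpace ℝ (Fin d))) [IsProbabilityMeasure μ]
    (k : EuclideanSpace ℝ (Fin d) → EuclideanSpace ℝ (Fin d) → ℝ)
    (m : EuclideanSpace ℝ (Fin d) → ℝ)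
    (hk_diff : ∀ x₀, Differentiable ℝ (k x₀))
    (hk_pos : ∀ x₀ x, 0 < k x₀ x)
    (hk_int : ∀ x, Integrable (fun x₀ => k x₀ x) μ)
    (hm : ∀ x, m x = ∫ x₀, k x₀ x ∂μ)
    (hm_pos : ∀ x, 0 < m x)
    (hm_diff : Differentiable ℝ m)
    (hgrad_int : ∀ x, Integrable (fun x₀ => gradient (k x₀) x) μ)
    (hswap : ∀ x, gradient m x = ∫ x₀, gradient (k x₀) x ∂μ)
    (G : EuclideanSpace ℝ (Fin d) → EuclideanSpace ℝ (Fin d))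
    (hG : Measurable G)
    (hint₁ : Integrable (fun q : EuclideanSpace ℝ (Fin d) × EuclideanSpace ℝ (Fin d) =>
        k q.1 q.2 * (inner ℝ (gradient (fun y => Real.log (k q.1 y)) q.2) (G q.2) : ℝ))
      (μ.prod volume))
    (hint₂ : Integrable (fun x =>
        m x * (inner ℝ (gradient (Real.log ∘ m) x) (G x) : ℝ)) volume) :
    ∫ x, m x * (inner ℝ (gradient (Real.log ∘ m) x) (G x) : ℝ)
      = ∫ x, ∫ x₀,
          k x₀ x * (inner ℝ (gradient (fun y => Real.log (k x₀ y)) x) (G x) : ℝ) ∂μ :=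
  cross_term_identity_general d μ k m hk_diff hk_pos hm_pos hm_diff hgrad_int hswap G
end

section
/- Let d be a positive integer, let μ be a probability measure on EuclideanSpace ℝ (Fin d) (the law of X_{t_{n−1}}), and let k : EuclideanSpace ℝ (Fin d) → EuclideanSpace ℝ (Fin d) → ℝ be such that: for every x₀, the function k(x₀, ·) is differentiable and strictly positive; for every x, the function x₀ ↦ k(x₀, x) is integrable with respect to μ; the marginal m(x) := ∫ k(x₀, x) dμ(x₀) is strictly positive and differentiable; and differentiation under the integral sign holds, i.e., for every x, x₀ ↦ ∇_x k(x₀, x) is integrable with respect to μ and ∇m(x) = ∫ ∇_x k(x₀, x) dμ(x₀). Fix weights λ : Fin d → ℝ with λ_i ≥ 0 for all i. Write S(x₀, x)_i := ∂_i (log k(x₀, ·))(x) and T(x)_i := ∂_i (log ∘ m)(x) for the conditional and marginal scores. Let G : EuclideanSpace ℝ (Fin d) → EuclideanSpace ℝ (Fin d) be measurable, and assume that the functions (x₀, x) ↦ k(x₀, x) · ∑_i λ_i (G(x)_i − S(x₀, x)_i)², (x₀, x) ↦ k(x₀, x) · ∑_i λ_i S(x₀, x)_i², x ↦ m(x) ·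 ∑_i λ_i (G(x)_i − T(x)_i)², and x ↦ m(x) · ∑_i λ_i T(x)_i² are all integrable (against μ ⊗ Lebesgue and Lebesgue, respectively). Then (1/2) ∫∫ k(x₀, x) ∑_i λ_i (G(x)_i − S(x₀, x)_i)² dμ(x₀) dx − (1/2) ∫ m(x) ∑_i λ_i (G(x)_i − T(x)_i)² dx = (1/2) ∫∫ k(x₀, x) ∑_i λ_i S(x₀, x)_i² dμ(x₀) dx − (1/2) ∫ m(x) ∑_i λ_i T(x)_i² dx; in particular the difference between the weighted conditional (denoising) score-matching objective and the weighted marginal score-matching objective does not depend on G. (This is the finite-dimensional core of Theorem 3 of the paper: the training objective L(θ) equals D_KL(P‖P^(θ)) up to a θ-independent constant C.) -/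
open MeasureTheory

/-!
Fix `x` and expand the squares. In `∫ k(x₀, x) ‖G x - S(x₀, x)‖²_λ dμ(x₀)` the `G`-dependent part
is `m x ‖G x‖²_λ - 2 ⟪G x, ∫ k(x₀, x) S(x₀, x) dμ(x₀)⟫_λ`. Since `k S = ∇ₓ k`, differentiating
under the integral gives `∫ k S dμ = ∇m = m T`, so this is exactly the `G`-dependent part of
`m x ‖G x - T x‖²_λ`. Integrating the resulting pointwise identity over `x` gives the theorem.
-/

theorem mul_sum_mul_sub_sq {ι : Type*} [Fintype ι] (c : ℝ) (lam g s : ι → ℝ) :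
    c * ∑ i, lam i * (g i - s i) ^ 2
      = c * ∑ i, lam i * s i ^ 2 + c * ∑ i, lam i * g i ^ 2
        - ∑ i, 2 * lam i * g i * (c * s i) := by
  simp only [Finset.mul_sum, ← Finset.sum_add_distrib, ← Finset.sum_sub_distrib]
  exact Finset.sum_congr rfl fun i _ => by ring

theorem integral_mul_sum_mul_sub_sq_sub {Ω ι : Type*} [MeasurableSpace Ω] [Fintype ι]
    {μ : Measure Ω} {κ : Ω → ℝ} {s : Ω → ι → ℝ} {t : ι → ℝ} (lam g : ι → ℝ)
    (hκ : Integrable κ μ) (hκs : ∀ i, Integrable (fun ω => κ ω * s ω i) μ)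
    (hs : Integrable (fun ω => κ ω * ∑ i, lam i * s ω i ^ 2) μ)
    (ht : ∀ i, (∫ ω, κ ω ∂μ) * t i = ∫ ω, κ ω * s ω i ∂μ) :
    ∫ ω, κ ω * ∑ i, lam i * (g i - s ω i) ^ 2 ∂μ
        - (∫ ω, κ ω ∂μ) * ∑ i, lam i * (g i - t i) ^ 2
      = ∫ ω, κ ω * ∑ i, lam i * s ω i ^ 2 ∂μ
        - (∫ ω, κ ω ∂μ) * ∑ i, lam i * t i ^ 2 := by
  have hg : Integrable (fun ω => κ ω * ∑ i, lam i * g i ^ 2) μ := hκ.mul_const _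
  have hsg : Integrable
      (fun ω => κ ω * ∑ i, lam i * s ω i ^ 2 + κ ω * ∑ i, lam i * g i ^ 2) μ := hs.add hg
  have hcross : Integrable (fun ω => ∑ i, 2 * lam i * g i * (κ ω * s ω i)) μ :=
    integrable_finsetSum _ fun i _ => (hκs i).const_mul _
  simp_rw [mul_sum_mul_sub_sq _ lam g]
  rw [integral_sub hsg hcross, integral_add hs hg, integral_mul_const,
    integral_finsetSum _ fun i _ => (hκs i).const_mul _]
  simp_rw [integral_const_mul, ← ht]
  ring

theorem mul_fderiv_log_apply {E : Type*} [NormedAddCommGroup E] [NormedSpace ℝ E]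
    {f : E → ℝ} {x : E} (hf : DifferentiableAt ℝ f x) (hx : f x ≠ 0) (v : E) :
    f x * fderiv ℝ (fun y => Real.log (f y)) x v = fderiv ℝ f x v := by
  rw [fderiv.log hf hx, smul_apply, smul_eq_mul, ← mul_assoc,
    mul_inv_cancel₀ hx, one_mul]

theorem fderiv_single_eq_gradient_apply {ι : Type*} [Fintype ι] [DecidableEq ι]
    (f : EuclideanSpace ℝ ι → ℝ) (x : EuclideanSpace ℝ ι) (i : ι) :
    fderiv ℝ f x (EuclideanSpace.single i 1) = gradient f x i := by
  rw [← inner_gradient_left, EuclideanSpace.inner_single_right]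
  simp

theorem denoising_score_matching_constant_difference_general
    (d : ℕ)
    (μ : Measure (EuclideanSpace ℝ (Fin d))) [IsProbabilityMeasure μ]
    (k : EuclideanSpace ℝ (Fin d) → EuclideanSpace ℝ (Fin d) → ℝ)
    (m : EuclideanSpace ℝ (Fin d) → ℝ)
    (hk_diff : ∀ x₀, Differentiable ℝ (k x₀))
    (hk_pos : ∀ x₀ x, 0 < k x₀ x)
    (hk_int : ∀ x, Integrable (fun x₀ => k x₀ x) μ)
    (hm : ∀ x, m x = ∫ x₀, k x₀ x ∂μ)
    (hm_pos : ∀ x, 0 < m x)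
    (hm_diff : Differentiable ℝ m)
    (hgrad_int : ∀ x, Integrable (fun x₀ => gradient (k x₀) x) μ)
    (hswap : ∀ x, gradient m x = ∫ x₀, gradient (k x₀) x ∂μ)
    (lam : Fin d → ℝ)
    (S : EuclideanSpace ℝ (Fin d) → EuclideanSpace ℝ (Fin d) → EuclideanSpace ℝ (Fin d))
    (hS : ∀ x₀ x i, S x₀ x i
      = fderiv ℝ (fun y => Real.log (k x₀ y)) x (EuclideanSpace.single i 1))
    (T : EuclideanSpace ℝ (Fin d) → EuclideanSpace ℝ (Fin d))
    (hT : ∀ x i, T x i = fderiv ℝ (Real.log ∘ m) x (EuclideanSpace.single i 1))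
    (G : EuclideanSpace ℝ (Fin d) → EuclideanSpace ℝ (Fin d))
    (hint₁ : Integrable (fun q : EuclideanSpace ℝ (Fin d) × EuclideanSpace ℝ (Fin d) =>
        k q.1 q.2 * ∑ i, lam i * (G q.2 i - S q.1 q.2 i) ^ 2) (μ.prod volume))
    (hint₂ : Integrable (fun q : EuclideanSpace ℝ (Fin d) × EuclideanSpace ℝ (Fin d) =>
        k q.1 q.2 * ∑ i, lam i * (S q.1 q.2 i) ^ 2) (μ.prod volume))
    (hint₃ : Integrable (fun x =>
        m x * ∑ i, lam i * (G x i - T x i) ^ 2) volume)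
    (hint₄ : Integrable (fun x =>
        m x * ∑ i, lam i * (T x i) ^ 2) volume) :
    (1 / 2) * (∫ x, ∫ x₀, k x₀ x * ∑ i, lam i * (G x i - S x₀ x i) ^ 2 ∂μ)
        - (1 / 2) * ∫ x, m x * ∑ i, lam i * (G x i - T x i) ^ 2
      = (1 / 2) * (∫ x, ∫ x₀, k x₀ x * ∑ i, lam i * (S x₀ x i) ^ 2 ∂μ)
        - (1 / 2) * ∫ x, m x * ∑ i, lam i * (T x i) ^ 2 := by
  have hkS : ∀ x₀ x i, k x₀ x * S x₀ x i = gradient (k x₀) x i := fun x₀ x i => by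
    rw [hS, mul_fderiv_log_apply (hk_diff x₀ x) (hk_pos x₀ x).ne',
      fderiv_single_eq_gradient_apply]
  have hmT : ∀ x i, m x * T x i = ∫ x₀, k x₀ x * S x₀ x i ∂μ := fun x i => by
    rw [hT, Function.comp_def, mul_fderiv_log_apply (hm_diff x) (hm_pos x).ne',
      fderiv_single_eq_gradient_apply, hswap, eval_integral_piLp (hgrad_int x).eval_piLp]
    simp only [hkS]
  have hfiber : ∀ᵐ x, (∫ x₀, k x₀ x * ∑ i, lam i * (G x i - S x₀ x i) ^ 2 ∂μ)
        - m x * ∑ i, lam i * (G x i - T x i) ^ 2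
      = (∫ x₀, k x₀ x * ∑ i, lam i * S x₀ x i ^ 2 ∂μ) - m x * ∑ i, lam i * T x i ^ 2 := by
    filter_upwards [hint₂.prod_left_ae] with x hx
    simp only [hm] at hmT ⊢
    refine integral_mul_sum_mul_sub_sq_sub lam (G x) (hk_int x) (fun i => ?_) hx (hmT x)
    simpa only [hkS] using (hgrad_int x).eval_piLp i
  rw [← mul_sub, ← mul_sub, ← integral_sub hint₁.integral_prod_right hint₃,
    ← integral_sub hint₂.integral_prod_right hint₄, integral_congr_ae hfiber]

/-- Finite-dimensional core of Theorem 3: the difference between the weighted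
conditional (denoising) score-matching objective and the weighted marginal
score-matching objective does not depend on `G`. -/
theorem denoising_score_matching_constant_difference
    (d : ℕ) (hd : 0 < d)
    (μ : Measure (EuclideanSpace ℝ (Fin d))) [IsProbabilityMeasure μ]
    (k : EuclideanSpace ℝ (Fin d) → EuclideanSpace ℝ (Fin d) → ℝ)
    (m : EuclideanSpace ℝ (Fin d) → ℝ)
    (hk_diff : ∀ x₀, Differentiable ℝ (k x₀))
    (hk_pos : ∀ x₀ x, 0 < k x₀ x)
    (hk_int : ∀ x, Integrable (fun x₀ => k x₀ x) μ)
    (hm : ∀ x, m x = ∫ x₀, k x₀ x ∂μ)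
    (hm_pos : ∀ x, 0 < m x)
    (hm_diff : Differentiable ℝ m)
    (hgrad_int : ∀ x, Integrable (fun x₀ => gradient (k x₀) x) μ)
    (hswap : ∀ x, gradient m x = ∫ x₀, gradient (k x₀) x ∂μ)
    (lam : Fin d → ℝ) (hlam : ∀ i, 0 ≤ lam i)
    (S : EuclideanSpace ℝ (Fin d) → EuclideanSpace ℝ (Fin d) → EuclideanSpace ℝ (Fin d))
    (hS : ∀ x₀ x i, S x₀ x i
      = fderiv ℝ (fun y => Real.log (k x₀ y)) x (EuclideanSpace.single i 1))
    (T : EuclideanSpace ℝ (Fin d) → EuclideanSpace ℝ (Fin d))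
    (hT : ∀ x i, T x i = fderiv ℝ (Real.log ∘ m) x (EuclideanSpace.single i 1))
    (G : EuclideanSpace ℝ (Fin d) → EuclideanSpace ℝ (Fin d))
    (hG : Measurable G)
    (hint₁ : Integrable (fun q : EuclideanSpace ℝ (Fin d) × EuclideanSpace ℝ (Fin d) =>
        k q.1 q.2 * ∑ i, lam i * (G q.2 i - S q.1 q.2 i) ^ 2) (μ.prod volume))
    (hint₂ : Integrable (fun q : EuclideanSpace ℝ (Fin d) × EuclideanSpace ℝ (Fin d) =>
        k q.1 q.2 * ∑ i, lam i * (S q.1 q.2 i) ^ 2) (μ.prod volume))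
    (hint₃ : Integrable (fun x =>
        m x * ∑ i, lam i * (G x i - T x i) ^ 2) volume)
    (hint₄ : Integrable (fun x =>
        m x * ∑ i, lam i * (T x i) ^ 2) volume) :
    (1 / 2) * (∫ x, ∫ x₀, k x₀ x * ∑ i, lam i * (G x i - S x₀ x i) ^ 2 ∂μ)
        - (1 / 2) * ∫ x, m x * ∑ i, lam i * (G x i - T x i) ^ 2
      = (1 / 2) * (∫ x, ∫ x₀, k x₀ x * ∑ i, lam i * (S x₀ x i) ^ 2 ∂μ)
        - (1 / 2) * ∫ x, m x * ∑ i, lam i * (T x i) ^ 2 :=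
  denoising_score_matching_constant_difference_general d μ k m hk_diff hk_pos hk_int hm hm_pos
    hm_diff hgrad_int hswap lam S hS T hT G hint₁ hint₂ hint₃ hint₄
end
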